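/- arXiv:2311.09527 — 4 statements merged into one kernel-verified Lean document; each statement's English description precedes it below -/
import Mathlib

section
/- Assume the Mangasarian–Fromovitz Constraint Qualification (MFCQ) holds at a point x in C. Let (u, v) be any minimizer of the cost J(x, u, v) = (1/2)‖Σ_{i=1}^m u_i ∇g_i(x) + Σ_{j=1}^k v_j ∇h_j(x)‖² over the set K_proj(x) of inputs (u, v) ∈ ℝ^m_{≥0} × ℝ^k for which the closed-loop vector field 𝓕(x, u, v) = −F(x) − Σ_i u_i ∇g_i(x) − Σ_j v_j ∇h_j(x) satisfies (∂g_{I₀}(x)/∂x)𝓕(x,u,v) ≤ 0 and (∂h(x)/∂x)𝓕(x,u,v) = 0, where I₀(x) is the set of active inequality constraints. Then 𝓕(x, u, v) equals the Euclidean projection of −F(x) onto the tangent cone T_C(x). -/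
open scoped RealInnerProductSpace BigOperators Topology
open Set Filter

noncomputable section

section AuxLemmas


variable {E' : Type*} [NormedAddCommGroup E'] [InnerProductSpace ℝ E'] [FiniteDimensional ℝ E']

/-- Carathéodory-type lemma for cones: any nonnegative combination is a nonnegative
combination over a linearly independent subfamily. -/
lemma aux_carath {ι : Type*} [Fintype ι] [DecidableEq ι] (b : ι → E') :
    ∀ (N : ℕ) (lam : ι → ℝ), (Finset.univ.filter fun i => lam i ≠ 0).card ≤ N →
      (∀ i, 0 ≤ lam i) →
      ∃ (J : Finset ι) (mu : ι → ℝ), (∀ i, 0 ≤ mu i) ∧ (∀ i ∉ J, mu i = 0) ∧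
        LinearIndependent ℝ (fun i : J => b i) ∧ ∑ i, mu i • b i = ∑ i, lam i • b i := by
  intro N
  induction N with
  | zero =>
    intro lam hcard _
    have hz : ∀ i, lam i = 0 := by
      intro i
      by_contra h
      have h1 : i ∈ Finset.univ.filter fun i => lam i ≠ 0 := by simp [h]
      have := Finset.card_pos.mpr ⟨i, h1⟩
      omega
    haveI : IsEmpty ((∅ : Finset ι) : Type _) := Finset.isEmpty_coe_sort.mpr rfl
    exact ⟨∅, 0, by simp, by simp, linearIndependent_empty_type, by simp [hz]⟩
  | succ N ih =>
    intro lam hcard hpos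
    set T := Finset.univ.filter fun i => lam i ≠ 0 with hT
    by_cases hind : LinearIndependent ℝ (fun i : T => b i)
    · refine ⟨T, lam, hpos, ?_, hind, rfl⟩
      intro i hi
      by_contra h
      exact hi (by simp [hT, h])
    · obtain ⟨c, hsum, i0, hi0⟩ := Fintype.not_linearIndependent_iff.mp hind
      -- extend `c` to all of `ι` by zero
      set cext : ι → ℝ := fun i => if h : i ∈ T then c ⟨i, h⟩ else 0 with hcext
      have hcext_sum : ∑ i, cext i • b i = 0 := by
        rw [← Finset.sum_subset (Finset.subset_univ T)
          (by intro i _ hi; simp [hcext, hi])]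
        rw [← Finset.sum_attach T (fun i => cext i • b i)]
        rw [← hsum]
        apply Finset.sum_congr rfl
        intro i _
        simp [hcext, i.2]
      have hcext_zero : ∀ i ∉ T, cext i = 0 := by intro i hi; simp [hcext, hi]
      have hcext_i0 : cext (i0 : ι) ≠ 0 := by simpa [hcext, i0.2] using hi0
      -- normalize sign so that some coefficient is positive
      obtain ⟨e, hepos, hezero, hesum⟩ :
          ∃ e : ι → ℝ, (∃ i, 0 < e i) ∧ (∀ i ∉ T, e i = 0) ∧ ∑ i, e i • b i = 0 := by
        rcases lt_or_gt_of_ne hcext_i0 with hneg | hpos'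
        · exact ⟨-cext, ⟨i0, by simpa using hneg⟩, fun i hi => by simp [hcext_zero i hi],
            by simp [hcext_sum]⟩
        · exact ⟨cext, ⟨i0, hpos'⟩, hcext_zero, hcext_sum⟩
      set P := Finset.univ.filter fun i => 0 < e i with hP
      have hPne : P.Nonempty := by
        obtain ⟨i, hi⟩ := hepos
        exact ⟨i, by simp [hP, hi]⟩
      set t := P.inf' hPne fun i => lam i / e i with ht
      have hmemP : ∀ i, 0 < e i → i ∈ P := fun i hi => by simp [hP, hi]
      have ht0 : 0 ≤ t := by
        apply Finset.le_inf'
        intro i hi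
        have : 0 < e i := by simpa [hP] using hi
        exact div_nonneg (hpos i) this.le
      obtain ⟨i1, hi1P, hi1⟩ := Finset.exists_mem_eq_inf' hPne fun i => lam i / e i
      have hei1 : 0 < e i1 := by simpa [hP] using hi1P
      set lam' : ι → ℝ := fun i => lam i - t * e i with hlam'
      have hlam'pos : ∀ i, 0 ≤ lam' i := by
        intro i
        rcases le_or_gt (e i) 0 with h | h
        · have : t * e i ≤ 0 := mul_nonpos_iff.mpr (Or.inl ⟨ht0, h⟩)
          simp only [hlam']
          linarith [hpos i]
        · have hle : t ≤ lam i / e i := Finset.inf'_le _ (hmemP i h)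
          have : t * e i ≤ lam i := (le_div_iff₀ h).mp hle
          simp only [hlam']; linarith
      have hlam'i1 : lam' i1 = 0 := by
        simp only [hlam', hi1]
        rw [ht, hi1, div_mul_cancel₀ _ hei1.ne', sub_self]
      have hsubset : (Finset.univ.filter fun i => lam' i ≠ 0) ⊆ T.erase i1 := by
        intro i hi
        simp only [Finset.mem_filter] at hi
        rcases hi with ⟨-, hne⟩
        rw [Finset.mem_erase]
        constructor
        · rintro rfl; exact hne hlam'i1
        · by_contra hiT
          have h1 : lam i = 0 := by
            by_contra h
            exact hiT (by simp [hT, h])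
          exact hne (by simp [hlam', h1, hezero i hiT])
      have hi1T : i1 ∈ T := by
        by_contra h
        exact absurd (hezero i1 h) hei1.ne'
      have hcard' : (Finset.univ.filter fun i => lam' i ≠ 0).card ≤ N := by
        have h1 := Finset.card_le_card hsubset
        have h2 : (T.erase i1).card = T.card - 1 := Finset.card_erase_of_mem hi1T
        have h3 : 0 < T.card := Finset.card_pos.mpr ⟨i1, hi1T⟩
        omega
      have hsum' : ∑ i, lam' i • b i = ∑ i, lam i • b i := by
        simp only [hlam', sub_smul, Finset.sum_sub_distrib]
        have : ∑ i, (t * e i) • b i = t • ∑ i, e i • b i := by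
          rw [Finset.smul_sum]
          exact Finset.sum_congr rfl fun i _ => (smul_smul t (e i) (b i)).symm
        rw [this, hesum, smul_zero, sub_zero]
      obtain ⟨J, mu, h1, h2, h3, h4⟩ := ih lam' hcard' hlam'pos
      exact ⟨J, mu, h1, h2, h3, h4.trans hsum'⟩

/-- The "total" linear map sending coefficients to the combination. -/
def auxT {ι : Type*} [Fintype ι] (v : ι → E') : (ι → ℝ) →ₗ[ℝ] E' where
  toFun := fun mu => ∑ i, mu i • v i
  map_add' := by
    intro f g
    simp [add_smul, Finset.sum_add_distrib]
  map_smul' := by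
    intro c f
    simp [smul_smul, Finset.smul_sum]

/-- A finitely generated cone is closed. -/
lemma aux_cone_closed {ι : Type*} [Fintype ι] [DecidableEq ι] (b : ι → E') :
    IsClosed {w : E' | ∃ lam : ι → ℝ, (∀ i, 0 ≤ lam i) ∧ w = ∑ i, lam i • b i} := by
  have key : {w : E' | ∃ lam : ι → ℝ, (∀ i, 0 ≤ lam i) ∧ w = ∑ i, lam i • b i}
      = ⋃ (J : {J : Finset ι // LinearIndependent ℝ (fun i : J => b i)}),
          auxT (fun i : (J : Finset ι) => b i) '' {mu | ∀ i, 0 ≤ mu i} := by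
    ext w
    simp only [Set.mem_setOf_eq, Set.mem_iUnion, Set.mem_image]
    constructor
    · rintro ⟨lam, hpos, rfl⟩
      obtain ⟨J, mu, h1, h2, h3, h4⟩ := aux_carath b (Finset.univ.filter fun i => lam i ≠ 0).card
        lam le_rfl hpos
      refine ⟨⟨J, h3⟩, fun i => mu i, fun i => h1 i, ?_⟩
      rw [← h4]
      simp only [auxT, LinearMap.coe_mk, AddHom.coe_mk]
      rw [← Finset.sum_subset (Finset.subset_univ J) (by intro i _ hi; simp [h2 i hi])]
      exact Finset.sum_attach J (fun i => mu i • b i)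
    · rintro ⟨J, mu, hpos, rfl⟩
      classical
      refine ⟨fun i => if h : i ∈ (J : Finset ι) then mu ⟨i, h⟩ else 0, ?_, ?_⟩
      · intro i
        by_cases h : i ∈ (J : Finset ι) <;> simp [h, hpos]
      · simp only [auxT, LinearMap.coe_mk, AddHom.coe_mk]
        rw [← Finset.sum_subset (Finset.subset_univ (J : Finset ι))
          (by intro i _ hi; simp [hi])]
        rw [← Finset.sum_attach (J : Finset ι)
          (fun i => (if h : i ∈ (J : Finset ι) then mu ⟨i, h⟩ else 0) • b i)]
        apply Finset.sum_congr rfl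
        intro i _
        simp [i.2]
  rw [key]
  apply isClosed_iUnion_of_finite
  intro J
  have hker : LinearMap.ker (auxT (fun i : ↥(J : Finset ι) => b i)) = ⊥ := by
    rw [LinearMap.ker_eq_bot']
    intro mu hmu
    have := Fintype.linearIndependent_iff.mp J.2 mu (by simpa [auxT] using hmu)
    funext i
    exact this i
  have hemb := LinearMap.isClosedEmbedding_of_injective hker
  apply hemb.isClosedMap
  have h2 : {mu : ↥(J : Finset ι) → ℝ | ∀ i, 0 ≤ mu i}
      = ⋂ i, (fun mu : ↥(J : Finset ι) → ℝ => mu i) ⁻¹' Set.Ici 0 := by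
    ext mu; simp [Set.mem_iInter]
  rw [h2]
  exact isClosed_iInter fun i => isClosed_Ici.preimage (continuous_apply i)

/-- Farkas lemma. -/
lemma aux_farkas {ι : Type*} [Fintype ι] [DecidableEq ι] [CompleteSpace E'] (b : ι → E') (w : E')
    (hw : ∀ ξ : E', (∀ i, ⟪b i, ξ⟫ ≤ 0) → ⟪w, ξ⟫ ≤ 0) :
    ∃ lam : ι → ℝ, (∀ i, 0 ≤ lam i) ∧ w = ∑ i, lam i • b i := by
  set S : Set E' := {w : E' | ∃ lam : ι → ℝ, (∀ i, 0 ≤ lam i) ∧ w = ∑ i, lam i • b i} with hS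
  let Scone : ConvexCone ℝ E' :=
    { carrier := S
      smul_mem' := by
        rintro c hc w ⟨lam, hpos, rfl⟩
        exact ⟨fun i => c * lam i, fun i => mul_nonneg hc.le (hpos i), by
          simp [Finset.smul_sum, smul_smul]⟩
      add_mem' := by
        rintro w ⟨lam, hpos, rfl⟩ w' ⟨lam', hpos', rfl⟩
        exact ⟨fun i => lam i + lam' i, fun i => add_nonneg (hpos i) (hpos' i), by
          simp [add_smul, Finset.sum_add_distrib]⟩ }
  by_contra hcon
  have hwS : w ∉ Scone := hcon
  have hSne : (Scone : Set E').Nonempty := ⟨0, ⟨0, by simp, by simp⟩⟩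
  let Sp : ProperCone ℝ E' :=
    { carrier := S
      add_mem' := by
        rintro w w' ⟨lam, hpos, rfl⟩ ⟨lam', hpos', rfl⟩
        exact ⟨fun i => lam i + lam' i, fun i => add_nonneg (hpos i) (hpos' i), by
          simp [add_smul, Finset.sum_add_distrib]⟩
      zero_mem' := ⟨0, by simp, by simp⟩
      smul_mem' := by
        rintro ⟨c, hc⟩ w ⟨lam, hpos, rfl⟩
        exact ⟨fun i => c * lam i, fun i => mul_nonneg hc (hpos i), by
          show (c : ℝ) • (∑ i, lam i • b i) = _
          simp [Finset.smul_sum, smul_smul]⟩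
      isClosed' := aux_cone_closed b }
  obtain ⟨y, hy1, hy2⟩ := ProperCone.hyperplane_separation' Sp (x₀ := w) hcon
  have hbi : ∀ i, 0 ≤ ⟪b i, y⟫ := by
    intro i
    apply hy1
    refine ⟨fun r => if r = i then 1 else 0, fun r => by positivity, ?_⟩
    simp [ite_smul]
  have := hw (-y) (fun i => by rw [inner_neg_right]; linarith [hbi i])
  rw [inner_neg_right, real_inner_comm] at this
  linarith [real_inner_comm y w]

end AuxLemmas

/-- The constraint set `C = {x | g(x) ≤ 0, Hx = c}`. -/
def constraintSet {n m k : ℕ} (g : Fin m → EuclideanSpace ℝ (Fin n) → ℝ)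
    (H : Fin k → EuclideanSpace ℝ (Fin n)) (c : Fin k → ℝ) :
    Set (EuclideanSpace ℝ (Fin n)) :=
  {x | (∀ i, g i x ≤ 0) ∧ ∀ j, ⟪H j, x⟫ = c j}

/-- Mangasarian–Fromovitz constraint qualification at `x`. -/
def MFCQat {n m k : ℕ} (g : Fin m → EuclideanSpace ℝ (Fin n) → ℝ)
    (H : Fin k → EuclideanSpace ℝ (Fin n)) (x : EuclideanSpace ℝ (Fin n)) : Prop :=
  LinearIndependent ℝ H ∧
    ∃ ξ : EuclideanSpace ℝ (Fin n),
      (∀ i, g i x = 0 → ⟪gradient (g i) x, ξ⟫ < 0) ∧ ∀ j, ⟪H j, ξ⟫ = 0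

/-- Solution set of the variational inequality `VI(F, C)`. -/
def SOL {n : ℕ} (F : EuclideanSpace ℝ (Fin n) → EuclideanSpace ℝ (Fin n))
    (C : Set (EuclideanSpace ℝ (Fin n))) : Set (EuclideanSpace ℝ (Fin n)) :=
  {xs | xs ∈ C ∧ ∀ x ∈ C, 0 ≤ ⟪x - xs, F xs⟫}

/-- Tangent cone of `C` at `x ∈ C` (valid parameterization under MFCQ). -/
def tangentC {n m k : ℕ} (g : Fin m → EuclideanSpace ℝ (Fin n) → ℝ)
    (H : Fin k → EuclideanSpace ℝ (Fin n)) (x : EuclideanSpace ℝ (Fin n)) :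
    Set (EuclideanSpace ℝ (Fin n)) :=
  {ξ | (∀ j, ⟪H j, ξ⟫ = 0) ∧ ∀ i, g i x = 0 → ⟪gradient (g i) x, ξ⟫ ≤ 0}

/-- The α-restricted tangent set. -/
def Talpha {n m k : ℕ} (g : Fin m → EuclideanSpace ℝ (Fin n) → ℝ)
    (H : Fin k → EuclideanSpace ℝ (Fin n)) (c : Fin k → ℝ) (α : ℝ)
    (x : EuclideanSpace ℝ (Fin n)) : Set (EuclideanSpace ℝ (Fin n)) :=
  {ξ | (∀ i, ⟪gradient (g i) x, ξ⟫ ≤ -α * g i x) ∧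
       ∀ j, ⟪H j, ξ⟫ = -α * (⟪H j, x⟫ - c j)}

/-- Closed-loop control-affine vector field `𝓕(x,u,v)`. -/
def Fcl {n m k : ℕ} (F : EuclideanSpace ℝ (Fin n) → EuclideanSpace ℝ (Fin n))
    (g : Fin m → EuclideanSpace ℝ (Fin n) → ℝ)
    (H : Fin k → EuclideanSpace ℝ (Fin n))
    (x : EuclideanSpace ℝ (Fin n)) (u : Fin m → ℝ) (v : Fin k → ℝ) :
    EuclideanSpace ℝ (Fin n) :=
  -F x - ∑ i, u i • gradient (g i) x - ∑ j, v j • H j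

/-- `p` is the Euclidean projection of `y` onto `K`. -/
def IsProjOn {n : ℕ} (K : Set (EuclideanSpace ℝ (Fin n)))
    (y p : EuclideanSpace ℝ (Fin n)) : Prop :=
  p ∈ K ∧ ∀ z ∈ K, ‖p - y‖ ≤ ‖z - y‖

/-- The CBF admissible input set `K_{cbf,α}(x)`. -/
def Kcbf {n m k : ℕ} (F : EuclideanSpace ℝ (Fin n) → EuclideanSpace ℝ (Fin n))
    (g : Fin m → EuclideanSpace ℝ (Fin n) → ℝ)
    (H : Fin k → EuclideanSpace ℝ (Fin n)) (c : Fin k → ℝ) (α : ℝ)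
    (x : EuclideanSpace ℝ (Fin n)) : Set ((Fin m → ℝ) × (Fin k → ℝ)) :=
  {p | (∀ i, 0 ≤ p.1 i) ∧
    (∀ i, ⟪gradient (g i) x, Fcl F g H x p.1 p.2⟫ ≤ -α * g i x) ∧
    ∀ j, ⟪H j, Fcl F g H x p.1 p.2⟫ = -α * (⟪H j, x⟫ - c j)}

/-- The objective `J(x,u,v) = ½‖Σᵢ uᵢ ∇gᵢ(x) + Σⱼ vⱼ ∇hⱼ(x)‖²`. -/
def Jcost {n m k : ℕ} (g : Fin m → EuclideanSpace ℝ (Fin n) → ℝ)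
    (H : Fin k → EuclideanSpace ℝ (Fin n))
    (x : EuclideanSpace ℝ (Fin n)) (p : (Fin m → ℝ) × (Fin k → ℝ)) : ℝ :=
  (1/2) * ‖(∑ i, p.1 i • gradient (g i) x) + ∑ j, p.2 j • H j‖ ^ 2


/-- Equivalence of control-based and projection-based implementations of
the projected monotone flow: if MFCQ holds at `x ∈ C` and `(u, v)` minimizes
`J(x,u,v)` over `K_proj(x)`, then `𝓕(x,u,v)` is the Euclidean projection of `-F(x)`
onto the tangent cone `T_C(x)`. -/
theorem statement0 {n m k : ℕ}
    (F : EuclideanSpace ℝ (Fin n) → EuclideanSpace ℝ (Fin n))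
    (g : Fin m → EuclideanSpace ℝ (Fin n) → ℝ)
    (H : Fin k → EuclideanSpace ℝ (Fin n)) (c : Fin k → ℝ)
    (hF : ContDiff ℝ 1 F) (hg : ∀ i, ContDiff ℝ 1 (g i))
    (hgconv : ∀ i, ConvexOn ℝ Set.univ (g i))
    (x : EuclideanSpace ℝ (Fin n)) (hx : x ∈ constraintSet g H c)
    (hmfcq : MFCQat g H x)
    (u : Fin m → ℝ) (v : Fin k → ℝ)
    -- `(u,v) ∈ K_proj(x)`
    (hmem : (u, v) ∈ {p : (Fin m → ℝ) × (Fin k → ℝ) | (∀ i, 0 ≤ p.1 i) ∧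
        (∀ i, g i x = 0 → ⟪gradient (g i) x, Fcl F g H x p.1 p.2⟫ ≤ 0) ∧
        ∀ j, ⟪H j, Fcl F g H x p.1 p.2⟫ = 0})
    -- `(u,v)` minimizes `J(x, ·, ·)` over `K_proj(x)`
    (hmin : ∀ p ∈ {p : (Fin m → ℝ) × (Fin k → ℝ) | (∀ i, 0 ≤ p.1 i) ∧
        (∀ i, g i x = 0 → ⟪gradient (g i) x, Fcl F g H x p.1 p.2⟫ ≤ 0) ∧
        ∀ j, ⟪H j, Fcl F g H x p.1 p.2⟫ = 0},
      Jcost g H x (u, v) ≤ Jcost g H x p) :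
    IsProjOn (tangentC g H x) (-F x) (Fcl F g H x u v) := by
  classical
  -- Notation
  set y : EuclideanSpace ℝ (Fin n) := -F x with hy
  set a : Fin m → EuclideanSpace ℝ (Fin n) := fun i => gradient (g i) x with ha
  have ha' : ∀ i, gradient (g i) x = a i := fun _ => rfl
  set K : Set (EuclideanSpace ℝ (Fin n)) := tangentC g H x with hK
  -- `K` is a nonempty closed convex set
  have hKmem : ∀ ξ : EuclideanSpace ℝ (Fin n), ξ ∈ K ↔ (∀ j, ⟪H j, ξ⟫ = 0) ∧ ∀ i, g i x = 0 → ⟪a i, ξ⟫ ≤ 0 := by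
    intro ξ; rfl
  have h0K : (0 : EuclideanSpace ℝ (Fin n)) ∈ K := by
    rw [hKmem]
    exact ⟨fun j => inner_zero_right _, fun i _ => le_of_eq (inner_zero_right _)⟩
  have hKclosed : IsClosed K := by
    have : K = (⋂ j, {ξ : EuclideanSpace ℝ (Fin n) | ⟪H j, ξ⟫ = 0}) ∩
        ⋂ i, ⋂ (_ : g i x = 0), {ξ : EuclideanSpace ℝ (Fin n) | ⟪a i, ξ⟫ ≤ 0} := by
      ext ξ
      simp only [hKmem, Set.mem_inter_iff, Set.mem_iInter, Set.mem_setOf_eq]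
    rw [this]
    refine IsClosed.inter (isClosed_iInter fun j => ?_)
      (isClosed_iInter fun i => isClosed_iInter fun _ => ?_)
    · exact isClosed_eq (Continuous.inner continuous_const continuous_id) continuous_const
    · exact isClosed_le (Continuous.inner continuous_const continuous_id) continuous_const
  have hKconv : Convex ℝ K := by
    intro ξ hξ η hη s t hs ht hst
    rw [hKmem] at hξ hη ⊢
    constructor
    · intro j
      rw [inner_add_right, real_inner_smul_right, real_inner_smul_right,
        hξ.1 j, hη.1 j]
      ring
    · intro i hi
      rw [inner_add_right, real_inner_smul_right, real_inner_smul_right]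
      have h1 := hξ.2 i hi
      have h2 := hη.2 i hi
      nlinarith
  have hKadd : ∀ ξ ∈ K, ∀ η ∈ K, ξ + η ∈ K := by
    intro ξ hξ η hη
    rw [hKmem] at hξ hη ⊢
    refine ⟨fun j => by rw [inner_add_right, hξ.1 j, hη.1 j]; ring, fun i hi => ?_⟩
    rw [inner_add_right]
    linarith [hξ.2 i hi, hη.2 i hi]
  -- the projection of `y` onto `K`
  obtain ⟨ps, hpsK, hinf⟩ := exists_norm_eq_iInf_of_complete_convex ⟨0, h0K⟩
    hKclosed.isComplete hKconv y
  have hVI : ∀ z ∈ K, ⟪y - ps, z - ps⟫ ≤ 0 :=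
    (norm_eq_iInf_iff_real_inner_le_zero hKconv hpsK).1 hinf
  have hdist : ∀ z ∈ K, ‖y - ps‖ ≤ ‖y - z‖ := by
    intro z hz
    rw [hinf]
    exact ciInf_le ⟨0, by rintro r ⟨w, rfl⟩; exact norm_nonneg _⟩ (⟨z, hz⟩ : K)
  set w : EuclideanSpace ℝ (Fin n) := y - ps with hw
  have hdual : ∀ ξ ∈ K, ⟪w, ξ⟫ ≤ 0 := by
    intro ξ hξ
    have := hVI (ps + ξ) (hKadd ps hpsK ξ hξ)
    simpa [add_sub_cancel_left] using this
  -- Farkas: represent `w` as a nonnegative combination of the generators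
  set b : (Fin m ⊕ (Fin k ⊕ Fin k)) → EuclideanSpace ℝ (Fin n) :=
    Sum.elim (fun i => if g i x = 0 then a i else 0) (Sum.elim H fun j => -H j) with hb
  obtain ⟨lam, hlampos, hlamsum⟩ := aux_farkas b w (by
    intro ξ hξ
    apply hdual
    rw [hKmem]
    constructor
    · intro j
      have h1 := hξ (Sum.inr (Sum.inl j))
      have h2 := hξ (Sum.inr (Sum.inr j))
      simp only [hb, Sum.elim_inr, Sum.elim_inl, inner_neg_left] at h1 h2
      linarith
    · intro i hi
      have h1 := hξ (Sum.inl i)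
      simpa only [hb, Sum.elim_inl, if_pos hi] using h1)
  -- build the multipliers
  set u' : Fin m → ℝ := fun i => if g i x = 0 then lam (Sum.inl i) else 0 with hu'
  set v' : Fin k → ℝ := fun j => lam (Sum.inr (Sum.inl j)) - lam (Sum.inr (Sum.inr j)) with hv'
  have hsum' : (∑ i, u' i • a i) + ∑ j, v' j • H j = w := by
    rw [hlamsum, Fintype.sum_sum_type, Fintype.sum_sum_type]
    congr 1
    · apply Finset.sum_congr rfl
      intro i _
      by_cases hi : g i x = 0 <;> simp [hu', hb, hi]
    · rw [← Finset.sum_add_distrib]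
      apply Finset.sum_congr rfl
      intro j _
      simp only [hv', hb, Sum.elim_inr, Sum.elim_inl, sub_smul, smul_neg]
      abel
  have hFcl' : Fcl F g H x u' v' = ps := by
    rw [Fcl, sub_sub]
    simp only [ha']
    rw [hsum', hw, hy]
    abel
  -- `(u', v')` is feasible
  have hmem' : (u', v') ∈ {p : (Fin m → ℝ) × (Fin k → ℝ) | (∀ i, 0 ≤ p.1 i) ∧
      (∀ i, g i x = 0 → ⟪gradient (g i) x, Fcl F g H x p.1 p.2⟫ ≤ 0) ∧
      ∀ j, ⟪H j, Fcl F g H x p.1 p.2⟫ = 0} := by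
    rw [hKmem] at hpsK
    refine ⟨fun i => ?_, fun i hi => ?_, fun j => ?_⟩
    · simp only [hu']
      by_cases hi : g i x = 0 <;> simp [hi, hlampos]
    · rw [hFcl']
      exact hpsK.2 i hi
    · rw [hFcl']
      exact hpsK.1 j
  -- conclude
  have hJ' : Jcost g H x (u', v') = (1/2) * ‖w‖ ^ 2 := by
    rw [Jcost]
    simp only [ha']
    rw [hsum']
  set wuv : EuclideanSpace ℝ (Fin n) := (∑ i, u i • a i) + ∑ j, v j • H j with hwuv
  have hJuv : Jcost g H x (u, v) = (1/2) * ‖wuv‖ ^ 2 := rfl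
  have hFp : Fcl F g H x u v - y = -wuv := by
    rw [Fcl, hy, hwuv]
    simp only [ha']
    abel
  constructor
  · exact ⟨hmem.2.2, hmem.2.1⟩
  · intro z hz
    have h1 : ‖Fcl F g H x u v - y‖ = ‖wuv‖ := by rw [hFp, norm_neg]
    have h2 : Jcost g H x (u, v) ≤ Jcost g H x (u', v') := hmin (u', v') hmem'
    rw [hJuv, hJ'] at h2
    have h3 : ‖wuv‖ ^ 2 ≤ ‖w‖ ^ 2 := by linarith
    have h4 : ‖w‖ ≤ ‖y - z‖ := hdist z hz
    have h5 : ‖wuv‖ ≤ ‖w‖ := by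
      nlinarith [norm_nonneg wuv, norm_nonneg w]
    rw [h1, norm_sub_rev z y]
    exact h5.trans h4


end
end

section
/- Suppose C is convex, MFCQ holds at every point of C, and F is monotone. Then every x* ∈ SOL(F, C) is globally Lyapunov stable relative to C; in particular, along every Carathéodory solution x(t) of the projected monotone flow that remains in C, the function t ↦ ‖x(t) − x*‖ is nonincreasing. -/
open scoped RealInnerProductSpace BigOperators Topology
open Set Filter

noncomputable section

/-- A Carathéodory solution of `ẋ = 𝒢(x)` remaining in `C`, in integral form. -/
def CaraSol {n : ℕ} (𝒢 : EuclideanSpace ℝ (Fin n) → EuclideanSpace ℝ (Fin n))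
    (C : Set (EuclideanSpace ℝ (Fin n))) (x : ℝ → EuclideanSpace ℝ (Fin n)) : Prop :=
  Continuous x ∧ (∀ t ≥ (0:ℝ), x t ∈ C) ∧
    ∀ t ≥ (0:ℝ), x t = x 0 + ∫ s in (0:ℝ)..t, 𝒢 (x s)

open MeasureTheory intervalIntegral

section Aux

variable {E : Type*} [NormedAddCommGroup E] [InnerProductSpace ℝ E]

/-- Gradient inequality for convex differentiable functions. -/
lemma grad_ineq [CompleteSpace E] {f : E → ℝ} (hf : Differentiable ℝ f)
    (hconv : ConvexOn ℝ Set.univ f) (x y : E) :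
    ⟪gradient f x, y - x⟫ ≤ f y - f x := by
  set d := y - x with hd
  have hgrad : HasGradientAt f (gradient f x) x := (hf x).hasGradientAt
  have hline : HasDerivAt (fun t : ℝ => x + t • d) d 0 := by
    simpa using ((hasDerivAt_id (0:ℝ)).smul_const d).const_add x
  have hφ : HasDerivAt (fun t : ℝ => f (x + t • d)) ⟪gradient f x, d⟫ 0 := by
    have h0 : x + (0:ℝ) • d = x := by simp
    have := (h0 ▸ hgrad.hasFDerivAt).comp_hasDerivAt 0 hline
    simpa [InnerProductSpace.toDual_apply_apply, Function.comp_def] using this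
  have hslope : Tendsto (slope (fun t : ℝ => f (x + t • d)) 0) (𝓝[>] 0)
      (𝓝 ⟪gradient f x, d⟫) :=
    (hasDerivAt_iff_tendsto_slope.1 hφ).mono_left
      (nhdsWithin_mono 0 (fun t ht => ne_of_gt ht))
  refine le_of_tendsto hslope ?_
  filter_upwards [Ioo_mem_nhdsGT_of_mem (Set.left_mem_Ico.2 one_pos)] with t ht
  have hcvx := hconv.2 (Set.mem_univ x) (Set.mem_univ y)
      (by linarith [ht.2] : (0:ℝ) ≤ 1 - t) ht.1.le (by ring)
  have hpt : (1 - t) • x + t • y = x + t • d := by rw [hd]; module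
  rw [hpt] at hcvx
  have h2 : f (x + t • d) - f (x + (0:ℝ) • d) ≤ t * (f y - f x) := by
    simp only [smul_eq_mul] at hcvx
    simp only [zero_smul, add_zero]
    nlinarith [hcvx]
  calc slope (fun t : ℝ => f (x + t • d)) 0 t
      = (f (x + t • d) - f (x + (0:ℝ) • d)) / t := by rw [slope_def_field]; simp
    _ ≤ f y - f x := by rw [div_le_iff₀ ht.1]; linarith [h2]

/-- Variational inequality for metric projections onto convex sets. -/
lemma proj_vi {K : Set E} (hK : Convex ℝ K) {y p : E} (hpK : p ∈ K)
    (hmin : ∀ z ∈ K, ‖p - y‖ ≤ ‖z - y‖) : ∀ z ∈ K, 0 ≤ ⟪p - y, z - p⟫ := by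
  intro z hz
  by_contra hneg
  push_neg at hneg
  set I := ⟪p - y, z - p⟫ with hI
  set Q := ‖z - p‖ ^ 2 with hQdef
  have hQ : 0 ≤ Q := sq_nonneg _
  set θ := min 1 ((-2 * I) / (Q + 1)) with hθ
  have hθpos : 0 < θ := lt_min one_pos (div_pos (by linarith) (by linarith))
  have hθ1 : θ ≤ 1 := min_le_left _ _
  have hθle : θ * (Q + 1) ≤ -2 * I := by
    rw [← le_div_iff₀ (by linarith : (0:ℝ) < Q + 1)]
    exact min_le_right _ _
  have hw : p + θ • (z - p) ∈ K := by
    have := hK hpK hz (by linarith : (0:ℝ) ≤ 1 - θ) hθpos.le (by ring)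
    convert this using 1
    module
  have h1 : ‖p - y‖ ≤ ‖(p - y) + θ • (z - p)‖ := by
    have := hmin _ hw
    rwa [show p + θ • (z - p) - y = (p - y) + θ • (z - p) by abel] at this
  have h2 : ‖p - y‖ ^ 2 ≤ ‖(p - y) + θ • (z - p)‖ ^ 2 :=
    pow_le_pow_left₀ (norm_nonneg _) h1 2
  rw [norm_add_sq_real, real_inner_smul_right, norm_smul, Real.norm_eq_abs,
    abs_of_pos hθpos, mul_pow] at h2
  nlinarith [h2, hθpos, hθle, hQ]

/-- Energy estimate: if `v b - v a = ∫ f` on subintervals of `[s,t]`, `f` integrable,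
and `⟪v τ, f τ⟫ ≤ 0` pointwise, then `‖v t‖ ≤ ‖v s‖`. -/
lemma energy [CompleteSpace E] {v f : ℝ → E} {s t : ℝ} (hst : s ≤ t)
    (hv : Continuous v)
    (hint : IntervalIntegrable f volume s t)
    (hsol : ∀ a b, s ≤ a → a ≤ b → b ≤ t → v b - v a = ∫ τ in a..b, f τ)
    (hneg : ∀ τ, s ≤ τ → τ ≤ t → ⟪v τ, f τ⟫ ≤ 0) :
    ‖v t‖ ≤ ‖v s‖ := by
  refine le_of_pow_le_pow_left₀ two_ne_zero (norm_nonneg _) ?_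
  set J := ∫ τ in s..t, ‖f τ‖ with hJ
  have hJ0 : 0 ≤ J := intervalIntegral.integral_nonneg hst (fun τ _ => norm_nonneg _)
  refine le_of_forall_pos_le_add ?_
  intro ε hε
  set ε' : ℝ := ε / (2 * (J + 1)) with hε'
  have hε'pos : 0 < ε' := div_pos hε (by linarith)
  -- uniform continuity of v on [s,t]
  obtain ⟨δ, hδpos, hδ⟩ := Metric.uniformContinuousOn_iff.1
    (isCompact_Icc.uniformContinuousOn_of_continuous (hv.continuousOn (s := Icc s t)))
    ε' hε'pos
  obtain ⟨N, hN⟩ := exists_nat_gt ((t - s) / δ)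
  have hNpos : 0 < (N : ℝ) := lt_of_le_of_lt (div_nonneg (by linarith) hδpos.le) hN
  set h : ℝ := (t - s) / N with hh
  have hh0 : 0 ≤ h := div_nonneg (by linarith) hNpos.le
  have hhδ : h < δ := by
    rw [hh, div_lt_iff₀ hNpos]
    calc t - s = ((t - s) / δ) * δ := by field_simp
      _ < N * δ := by exact mul_lt_mul_of_pos_right hN hδpos
      _ = δ * N := by ring
  set a : ℕ → ℝ := fun i => s + i * h with ha
  have haN : a N = t := by
    rw [ha]; simp only [hh]; field_simp; ring
  have ha0 : a 0 = s := by simp [ha]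
  have hamono : ∀ i j : ℕ, i ≤ j → a i ≤ a j := by
    intro i j hij
    simp only [ha]
    have : (i:ℝ) ≤ j := Nat.cast_le.2 hij
    nlinarith
  have haIcc : ∀ i : ℕ, i ≤ N → a i ∈ Icc s t := by
    intro i hi
    exact ⟨by rw [← ha0]; exact hamono 0 i (Nat.zero_le _), by rw [← haN]; exact hamono i N hi⟩
  have hsub : ∀ i : ℕ, i < N → IntervalIntegrable f volume (a i) (a (i+1)) := by
    intro i hi
    refine hint.mono_set ?_
    rw [uIcc_of_le (hamono i (i+1) (Nat.le_succ _)), uIcc_of_le hst]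
    exact Icc_subset_Icc (haIcc i hi.le).1 (haIcc (i+1) hi).2
  -- per-interval estimate
  have hper : ∀ i : ℕ, i < N →
      ‖v (a (i+1))‖ ^ 2 - ‖v (a i)‖ ^ 2 ≤ 2 * ε' * ∫ τ in a i..a (i+1), ‖f τ‖ := by
    intro i hi
    set A := a i with hA
    set B := a (i+1) with hB
    have hAB : A ≤ B := hamono i (i+1) (Nat.le_succ _)
    have hAmem : A ∈ Icc s t := haIcc i hi.le
    have hBmem : B ∈ Icc s t := haIcc (i+1) hi
    have hBA : B - A = h := by simp only [hA, hB, ha]; push_cast; ring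
    have hfAB : IntegrableOn f (Ioc A B) volume :=
      (intervalIntegrable_iff_integrableOn_Ioc_of_le hAB).1 (hsub i hi)
    set w := v B + v A with hw
    have hid : ‖v B‖ ^ 2 - ‖v A‖ ^ 2 = ⟪w, v B - v A⟫ := by
      rw [hw, inner_add_left, inner_sub_right, inner_sub_right,
        real_inner_self_eq_norm_sq, real_inner_self_eq_norm_sq, real_inner_comm (v A) (v B)]
      ring
    have hval : v B - v A = ∫ τ in Ioc A B, f τ := by
      rw [hsol A B hAmem.1 hAB hBmem.2, intervalIntegral.integral_of_le hAB]
    have hmain : ‖v B‖ ^ 2 - ‖v A‖ ^ 2 = ∫ τ in Ioc A B, ⟪w, f τ⟫ := by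
      rw [hid, hval, integral_inner hfAB]
    rw [hmain]
    have hbound : ∀ τ ∈ Ioc A B, ⟪w, f τ⟫ ≤ 2 * ε' * ‖f τ‖ := by
      intro τ hτ
      have hτmem : τ ∈ Icc s t := ⟨hAmem.1.trans hτ.1.le, hτ.2.trans hBmem.2⟩
      have hvτ : ⟪v τ, f τ⟫ ≤ 0 := hneg τ hτmem.1 hτmem.2
      have hdA : dist A τ < δ := by
        rw [Real.dist_eq, abs_of_nonpos (by linarith [hτ.1.le] : A - τ ≤ 0)]
        have : τ ≤ B := hτ.2
        linarith [hhδ, hBA]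
      have hdB : dist B τ < δ := by
        rw [Real.dist_eq, abs_of_nonneg (by linarith [hτ.2] : 0 ≤ B - τ)]
        linarith [hτ.1, hhδ, hBA]
      have h1 : ‖v A - v τ‖ < ε' := by
        have := hδ A hAmem τ hτmem hdA
        rwa [dist_eq_norm] at this
      have h2 : ‖v B - v τ‖ < ε' := by
        have := hδ B hBmem τ hτmem hdB
        rwa [dist_eq_norm] at this
      have hsplit : ⟪w, f τ⟫ = 2 * ⟪v τ, f τ⟫ + ⟪w - (2:ℝ) • v τ, f τ⟫ := by
        rw [inner_sub_left, real_inner_smul_left]; ring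
      have hwnorm : ‖w - (2:ℝ) • v τ‖ ≤ 2 * ε' := by
        have : w - (2:ℝ) • v τ = (v B - v τ) + (v A - v τ) := by rw [hw]; module
        rw [this]
        calc ‖(v B - v τ) + (v A - v τ)‖ ≤ ‖v B - v τ‖ + ‖v A - v τ‖ := norm_add_le _ _
          _ ≤ 2 * ε' := by linarith
      have hcs : ⟪w - (2:ℝ) • v τ, f τ⟫ ≤ ‖w - (2:ℝ) • v τ‖ * ‖f τ‖ :=
        real_inner_le_norm _ _
      have : ‖w - (2:ℝ) • v τ‖ * ‖f τ‖ ≤ 2 * ε' * ‖f τ‖ :=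
        mul_le_mul_of_nonneg_right hwnorm (norm_nonneg _)
      linarith [hsplit, hvτ, hcs, this]
    have hint1 : IntegrableOn (fun τ => ⟪w, f τ⟫) (Ioc A B) volume :=
      hfAB.const_inner w
    have hint2 : IntegrableOn (fun τ => 2 * ε' * ‖f τ‖) (Ioc A B) volume :=
      (hfAB.norm.const_mul _)
    calc ∫ τ in Ioc A B, ⟪w, f τ⟫ ≤ ∫ τ in Ioc A B, 2 * ε' * ‖f τ‖ :=
          setIntegral_mono_on hint1 hint2 measurableSet_Ioc hbound
      _ = 2 * ε' * ∫ τ in Ioc A B, ‖f τ‖ := by rw [MeasureTheory.integral_const_mul]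
      _ = 2 * ε' * ∫ τ in A..B, ‖f τ‖ := by rw [intervalIntegral.integral_of_le hAB]
  -- sum up
  have htele : ∑ i ∈ Finset.range N, (‖v (a (i+1))‖ ^ 2 - ‖v (a i)‖ ^ 2)
      = ‖v t‖ ^ 2 - ‖v s‖ ^ 2 := by
    rw [Finset.sum_range_sub (fun i => ‖v (a i)‖ ^ 2) N, haN, ha0]
  have hsumI : ∑ i ∈ Finset.range N, ∫ τ in a i..a (i+1), ‖f τ‖ = J := by
    rw [hJ, ← ha0, ← haN]
    exact intervalIntegral.sum_integral_adjacent_intervals (fun i hi => (hsub i hi).norm)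
  have hfinal : ‖v t‖ ^ 2 - ‖v s‖ ^ 2 ≤ 2 * ε' * J := by
    calc ‖v t‖ ^ 2 - ‖v s‖ ^ 2
        = ∑ i ∈ Finset.range N, (‖v (a (i+1))‖ ^ 2 - ‖v (a i)‖ ^ 2) := htele.symm
      _ ≤ ∑ i ∈ Finset.range N, 2 * ε' * ∫ τ in a i..a (i+1), ‖f τ‖ :=
          Finset.sum_le_sum (fun i hi => hper i (Finset.mem_range.1 hi))
      _ = 2 * ε' * J := by rw [← Finset.mul_sum, hsumI]
  have : 2 * ε' * J ≤ ε := by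
    rw [hε']
    rw [show 2 * (ε / (2 * (J + 1))) * J = (ε * J) / (J + 1) by field_simp,
      div_le_iff₀ (by linarith : (0:ℝ) < J + 1)]
    nlinarith
  linarith

end Aux

section Aux2

lemma tangentC_convex {n m k : ℕ} (g : Fin m → EuclideanSpace ℝ (Fin n) → ℝ)
    (H : Fin k → EuclideanSpace ℝ (Fin n)) (x : EuclideanSpace ℝ (Fin n)) :
    Convex ℝ (tangentC g H x) := by
  intro z1 h1 z2 h2 a b ha hb hab
  refine ⟨fun j => ?_, fun i hi => ?_⟩
  · rw [inner_add_right, real_inner_smul_right, real_inner_smul_right, h1.1 j, h2.1 j]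
    ring
  · rw [inner_add_right, real_inner_smul_right, real_inner_smul_right]
    have e1 := h1.2 i hi
    have e2 := h2.2 i hi
    nlinarith

/-- Pointwise Lyapunov decrease: `⟪x − x*, proj_{T_C(x)}(−F(x))⟫ ≤ 0`. -/
lemma pointwise_decrease {n m k : ℕ}
    (F : EuclideanSpace ℝ (Fin n) → EuclideanSpace ℝ (Fin n))
    (g : Fin m → EuclideanSpace ℝ (Fin n) → ℝ)
    (H : Fin k → EuclideanSpace ℝ (Fin n)) (c : Fin k → ℝ)
    (hg : ∀ i, ContDiff ℝ 1 (g i))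
    (hgconv : ∀ i, ConvexOn ℝ Set.univ (g i))
    (hmono : ∀ x y : EuclideanSpace ℝ (Fin n), 0 ≤ ⟪x - y, F x - F y⟫)
    {x xs p : EuclideanSpace ℝ (Fin n)}
    (hx : x ∈ constraintSet g H c) (hxs : xs ∈ SOL F (constraintSet g H c))
    (hproj : IsProjOn (tangentC g H x) (-F x) p) :
    ⟪x - xs, p⟫ ≤ 0 := by
  obtain ⟨hpK, hmin⟩ := hproj
  set y : EuclideanSpace ℝ (Fin n) := -F x with hy
  have hVI : ∀ z ∈ tangentC g H x, 0 ≤ ⟪p - y, z - p⟫ :=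
    proj_vi (tangentC_convex g H x) hpK hmin
  -- cone facts
  have h0K : (0 : EuclideanSpace ℝ (Fin n)) ∈ tangentC g H x :=
    ⟨fun j => inner_zero_right _, fun i _ => le_of_eq (inner_zero_right _)⟩
  have h2p : (2:ℝ) • p ∈ tangentC g H x := by
    refine ⟨fun j => ?_, fun i hi => ?_⟩
    · rw [real_inner_smul_right, hpK.1 j]; ring
    · rw [real_inner_smul_right]
      nlinarith [hpK.2 i hi]
  have e1 := hVI 0 h0K
  have e2 := hVI _ h2p
  have hpp : ⟪p - y, p⟫ = 0 := by
    rw [zero_sub, inner_neg_right] at e1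
    rw [show (2:ℝ) • p - p = p by module] at e2
    linarith
  -- xs - x ∈ tangent cone
  have hmem : xs - x ∈ tangentC g H x := by
    refine ⟨fun j => ?_, fun i hi => ?_⟩
    · rw [inner_sub_right, hxs.1.2 j, hx.2 j]; ring
    · have hgi := grad_ineq ((hg i).differentiable one_ne_zero) (hgconv i) x xs
      have h1 : g i xs ≤ 0 := hxs.1.1 i
      rw [hi] at hgi
      linarith
  have e3 := hVI _ hmem
  rw [inner_sub_right, hpp, sub_zero] at e3
  -- monotonicity facts
  have e5 : 0 ≤ ⟪x - xs, F x - F xs⟫ := hmono x xs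
  have e6 : 0 ≤ ⟪x - xs, F xs⟫ := hxs.2 x hx
  -- combine
  have hsplit : ⟪x - xs, p⟫
      = -⟪p - y, xs - x⟫ - ⟪x - xs, F x - F xs⟫ - ⟪x - xs, F xs⟫ := by
    have h1 : ⟪x - xs, p⟫ = ⟪x - xs, p - y⟫ + ⟪x - xs, y⟫ := by
      rw [← inner_add_right]; norm_num
    have h2 : ⟪x - xs, p - y⟫ = -⟪p - y, xs - x⟫ := by
      rw [real_inner_comm, show x - xs = -(xs - x) by abel, inner_neg_right]
    have h4 : ⟪x - xs, F x - F xs⟫ + ⟪x - xs, F xs⟫ = ⟪x - xs, F x⟫ := by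
      rw [← inner_add_right, sub_add_cancel]
    have h3 : ⟪x - xs, y⟫ = -⟪x - xs, F x⟫ := by
      rw [hy, inner_neg_right]
    rw [h1, h2, h3, ← h4]
    ring
  rw [hsplit]
  linarith

end Aux2

/-- Global Lyapunov stability of solutions of `VI(F,C)` for the
projected monotone flow when `F` is monotone: `x*` is globally Lyapunov stable
relative to `C`, and `t ↦ ‖x(t) − x*‖` is nonincreasing along every Carathéodory
solution remaining in `C`. -/
theorem statement2 {n m k : ℕ}
    (F : EuclideanSpace ℝ (Fin n) → EuclideanSpace ℝ (Fin n))
    (g : Fin m → EuclideanSpace ℝ (Fin n) → ℝ)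
    (H : Fin k → EuclideanSpace ℝ (Fin n)) (c : Fin k → ℝ)
    (hF : ContDiff ℝ 1 F) (hg : ∀ i, ContDiff ℝ 1 (g i))
    (hgconv : ∀ i, ConvexOn ℝ Set.univ (g i))
    (hCconv : Convex ℝ (constraintSet g H c))
    (hmfcq : ∀ x ∈ constraintSet g H c, MFCQat g H x)
    (hmono : ∀ x y : EuclideanSpace ℝ (Fin n), 0 ≤ ⟪x - y, F x - F y⟫)
    (𝒢 : EuclideanSpace ℝ (Fin n) → EuclideanSpace ℝ (Fin n))
    (h𝒢 : ∀ x ∈ constraintSet g H c, IsProjOn (tangentC g H x) (-F x) (𝒢 x))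
    (xs : EuclideanSpace ℝ (Fin n)) (hxs : xs ∈ SOL F (constraintSet g H c)) :
    -- global Lyapunov stability relative to `C`
    ((∀ ε > (0:ℝ), ∃ δ > (0:ℝ),
        ∀ x : ℝ → EuclideanSpace ℝ (Fin n), CaraSol 𝒢 (constraintSet g H c) x →
          ‖x 0 - xs‖ < δ → ∀ t ≥ (0:ℝ), ‖x t - xs‖ < ε) ∧
    -- `t ↦ ‖x(t) − x*‖` is nonincreasing along solutions in `C`
      (∀ x : ℝ → EuclideanSpace ℝ (Fin n), CaraSol 𝒢 (constraintSet g H c) x →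
        ∀ s t : ℝ, 0 ≤ s → s ≤ t → ‖x t - xs‖ ≤ ‖x s - xs‖)) := by
  have key : ∀ x : ℝ → EuclideanSpace ℝ (Fin n), CaraSol 𝒢 (constraintSet g H c) x →
      ∀ s t : ℝ, 0 ≤ s → s ≤ t → ‖x t - xs‖ ≤ ‖x s - xs‖ := by
    intro x hx s t hs hst
    obtain ⟨hcont, hmemC, heq⟩ := hx
    set f : ℝ → EuclideanSpace ℝ (Fin n) := fun τ => 𝒢 (x τ) with hf
    have hptwise : ∀ τ : ℝ, 0 ≤ τ → ⟪x τ - xs, f τ⟫ ≤ 0 := fun τ hτ =>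
      pointwise_decrease F g H c hg hgconv hmono (hmemC τ hτ) hxs (h𝒢 (x τ) (hmemC τ hτ))
    set P : ℝ → Prop := fun τ => IntervalIntegrable f volume 0 τ with hP
    have hPmono : ∀ a b : ℝ, 0 ≤ a → a ≤ b → P b → P a := by
      intro a b ha hab hb
      refine hb.mono_set ?_
      rw [uIcc_of_le ha, uIcc_of_le (ha.trans hab)]
      exact Icc_subset_Icc le_rfl hab
    have hsubkey : ∀ a b : ℝ, 0 ≤ a → a ≤ b → P b → ‖x b - xs‖ ≤ ‖x a - xs‖ := by
      intro a b ha hab hPb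
      refine energy (v := fun τ => x τ - xs) (f := f) hab
        (hcont.sub continuous_const) ?_ ?_ ?_
      · exact hPb.mono_set (by
          rw [uIcc_of_le hab, uIcc_of_le (ha.trans hab)]
          exact Icc_subset_Icc ha le_rfl)
      · intro a' b' h1 h2 h3
        have hb' : (0:ℝ) ≤ b' := ha.trans (h1.trans h2)
        have ha' : (0:ℝ) ≤ a' := ha.trans h1
        have e1 := heq b' hb'
        have e2 := heq a' ha'
        have hPb' : P b' := hPmono b' b hb' h3 hPb
        have hPa' : P a' := hPmono a' b' ha' h2 hPb'
        have := intervalIntegral.integral_interval_sub_left hPb' hPa'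
        rw [show (x b' - xs) - (x a' - xs) = x b' - x a' by abel, e1, e2]
        rw [show x 0 + (∫ τ in (0:ℝ)..b', f τ) - (x 0 + ∫ τ in (0:ℝ)..a', f τ)
            = (∫ τ in (0:ℝ)..b', f τ) - ∫ τ in (0:ℝ)..a', f τ by abel]
        exact this
      · intro τ h1 _
        exact hptwise τ (ha.trans h1)
    by_cases hPt : P t
    · exact hsubkey s t hs hst hPt
    · have hx0 : ∀ τ : ℝ, 0 ≤ τ → ¬ P τ → x τ = x 0 := by
        intro τ h hnP
        rw [heq τ h, intervalIntegral.integral_undef hnP, add_zero]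
      have hxt : x t = x 0 := hx0 t (hs.trans hst) hPt
      by_cases hPs : P s
      · set B : Set ℝ := {τ ∈ Icc s t | P τ} with hB
        have hsB : s ∈ B := ⟨⟨le_rfl, hst⟩, hPs⟩
        have hBne : B.Nonempty := ⟨s, hsB⟩
        have hBbdd : BddAbove B := ⟨t, fun τ hτ => hτ.1.2⟩
        set T := sSup B with hT
        have hsT : s ≤ T := le_csSup hBbdd hsB
        have hTt : T ≤ t := csSup_le hBne (fun τ hτ => hτ.1.2)
        have hmidB : ∀ τ : ℝ, s ≤ τ → τ < T → P τ := by
          intro τ h1 h2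
          obtain ⟨b, hbB, hτb⟩ := exists_lt_of_lt_csSup hBne h2
          exact hPmono τ b (hs.trans h1) hτb.le hbB.2
        have hxT : x T = x 0 := by
          rcases eq_or_lt_of_le hTt with hc | hc
          · rw [hc]; exact hxt
          · have hev : ∀ᶠ τ in 𝓝[>] T, x τ = x 0 := by
              filter_upwards [Ioo_mem_nhdsGT_of_mem ⟨le_rfl, hc⟩] with τ hτ
              refine hx0 τ ((hs.trans hsT).trans hτ.1.le) ?_
              intro hPτ
              have hτB : τ ∈ B := ⟨⟨hsT.trans hτ.1.le, hτ.2.le⟩, hPτ⟩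
              exact absurd (le_csSup hBbdd hτB) (not_le.2 hτ.1)
            have h1 : Tendsto x (𝓝[>] T) (𝓝 (x T)) :=
              (hcont.tendsto T).mono_left nhdsWithin_le_nhds
            have h2 : Tendsto x (𝓝[>] T) (𝓝 (x 0)) :=
              tendsto_const_nhds.congr' (by filter_upwards [hev] with τ h using h.symm)
            exact tendsto_nhds_unique h1 h2
        have hTs : ‖x T - xs‖ ≤ ‖x s - xs‖ := by
          rcases eq_or_lt_of_le hsT with hc | hc
          · rw [← hc]
          · have hev : ∀ᶠ τ in 𝓝[<] T, ‖x τ - xs‖ ≤ ‖x s - xs‖ := by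
              filter_upwards [Ioo_mem_nhdsLT_of_mem ⟨hc, le_rfl⟩] with τ hτ
              exact hsubkey s τ hs hτ.1.le (hmidB τ hτ.1.le hτ.2)
            have h1 : Tendsto (fun τ => ‖x τ - xs‖) (𝓝[<] T) (𝓝 ‖x T - xs‖) :=
              (((hcont.sub continuous_const).norm).tendsto T).mono_left nhdsWithin_le_nhds
            exact le_of_tendsto h1 hev
        calc ‖x t - xs‖ = ‖x T - xs‖ := by rw [hxt, hxT]
          _ ≤ ‖x s - xs‖ := hTs
      · rw [hxt, hx0 s hs hPs]
  refine ⟨fun ε hε => ⟨ε, hε, fun x hx h0 t ht => lt_of_le_of_lt (key x hx 0 t le_rfl ht) h0⟩, key⟩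


end
end

section
/- Assume MFCQ holds at every point of C and let α > 0. The set-valued map x ↦ T_C^(α)(x) satisfies: (i) T_C^(α)(x) is convex for every x ∈ ℝⁿ; (ii) for every x ∈ C, the system of affine inequalities and equalities defining T_C^(α)(x) satisfies Slater's condition, so MFCQ holds at every ξ ∈ T_C^(α)(x); (iii) there exists an open set X containing C such that T_C^(α)(x) ≠ ∅ for all x ∈ X; and (iv) if x ∈ C, then T_C^(α)(x) ⊆ T_C(x). -/
open scoped RealInnerProductSpace BigOperators Topology
open Set Filter

noncomputable section

/-- A linear right inverse to `x ↦ (⟪H j, x⟫)ⱼ` when `H` is linearly independent. -/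
lemma exists_linear_section {n k : ℕ} (H : Fin k → EuclideanSpace ℝ (Fin n))
    (hH : LinearIndependent ℝ H) :
    ∃ B : (Fin k → ℝ) →ₗ[ℝ] EuclideanSpace ℝ (Fin n), ∀ y j, ⟪H j, B y⟫ = y j := by
  classical
  set T' : (Fin k → ℝ) →ₗ[ℝ] EuclideanSpace ℝ (Fin n) :=
    { toFun := fun y => ∑ j, y j • H j
      map_add' := by intro a b; simp [add_smul, Finset.sum_add_distrib]
      map_smul' := by intro r a; simp [smul_smul, Finset.smul_sum] } with hT'
  set T : EuclideanSpace ℝ (Fin n) →ₗ[ℝ] (Fin k → ℝ) :=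
    { toFun := fun x j => ⟪H j, x⟫
      map_add' := by intro a b; funext j; simp only [inner_add_right, Pi.add_apply]
      map_smul' := by
        intro r a; funext j
        simp only [RingHom.id_apply, Pi.smul_apply, smul_eq_mul, real_inner_smul_right] } with hT
  have hMinj : Function.Injective (T ∘ₗ T') := by
    rw [← LinearMap.ker_eq_bot, LinearMap.ker_eq_bot']
    intro y hy
    have h0 : ⟪T' y, T' y⟫ = 0 := by
      have h1 : ⟪T' y, T' y⟫ = ∑ j, y j * ⟪H j, T' y⟫ := by
        conv_lhs => rw [show (T' y : EuclideanSpace ℝ (Fin n)) = ∑ j, y j • H j from rfl]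
        rw [sum_inner]
        exact Finset.sum_congr rfl fun j _ => real_inner_smul_left _ _ _
      rw [h1]
      refine Finset.sum_eq_zero fun j _ => ?_
      have h2 : ⟪H j, T' y⟫ = 0 := congrFun hy j
      rw [h2, mul_zero]
    have hT'y : T' y = 0 := by rwa [inner_self_eq_zero] at h0
    have := Fintype.linearIndependent_iff.mp hH y (by simpa [hT'] using hT'y)
    funext j; exact this j
  have hMsurj : Function.Surjective (T ∘ₗ T') :=
    (LinearMap.injective_iff_surjective).mp hMinj
  have hTsurj : LinearMap.range T = ⊤ := by
    rw [LinearMap.range_eq_top]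
    intro y
    obtain ⟨z, hz⟩ := hMsurj y
    exact ⟨T' z, hz⟩
  obtain ⟨B, hB⟩ := T.exists_rightInverse_of_surjective hTsurj
  refine ⟨B, fun y j => ?_⟩
  have := congrFun (congrArg (fun f => f y) (congrArg DFunLike.coe hB)) j
  simpa [hT] using this

lemma cont_grad {n : ℕ} {f : EuclideanSpace ℝ (Fin n) → ℝ} (hf : ContDiff ℝ 1 f) :
    Continuous (gradient f) := by
  have h1 : Continuous (fderiv ℝ f) := hf.continuous_fderiv one_ne_zero
  exact (InnerProductSpace.toDual ℝ (EuclideanSpace ℝ (Fin n))).symm.continuous.comp h1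

/-- Slater's condition for the α-restricted tangent set at points of `C`. -/
lemma slater_of_mfcq {n m k : ℕ} {g : Fin m → EuclideanSpace ℝ (Fin n) → ℝ}
    {H : Fin k → EuclideanSpace ℝ (Fin n)} {c : Fin k → ℝ} {α : ℝ} (hα : 0 < α)
    {x : EuclideanSpace ℝ (Fin n)} (hx : x ∈ constraintSet g H c) (hm : MFCQat g H x) :
    ∃ ξ : EuclideanSpace ℝ (Fin n),
      (∀ i, ⟪gradient (g i) x, ξ⟫ < -α * g i x) ∧
      ∀ j, ⟪H j, ξ⟫ = -α * (⟪H j, x⟫ - c j) := by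
  classical
  obtain ⟨-, ξ, hξg, hξH⟩ := hm
  obtain ⟨hgle, hheq⟩ := hx
  set v : Fin m → ℝ := fun i => ⟪gradient (g i) x, ξ⟫ with hv
  have hq : ∀ i, 0 < (if 0 < v i then (-α * g i x) / (2 * v i) else 1) := by
    intro i
    by_cases hvi : 0 < v i
    · rw [if_pos hvi]
      have hgi : g i x ≠ 0 := by
        intro h0
        have h5 : v i < 0 := hξg i h0
        linarith
      have hglt : g i x < 0 := lt_of_le_of_ne (hgle i) hgi
      have hr : 0 < -α * g i x := by nlinarith
      positivity
    · rw [if_neg hvi]; norm_num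
  obtain ⟨t, htpos, htle⟩ :
      ∃ t : ℝ, 0 < t ∧ ∀ i, t ≤ (if 0 < v i then (-α * g i x) / (2 * v i) else 1) := by
    rcases isEmpty_or_nonempty (Fin m) with hm | hm
    · exact ⟨1, one_pos, fun i => (IsEmpty.false i).elim⟩
    · refine ⟨min 1 (Finset.univ.inf' Finset.univ_nonempty
        (fun i => if 0 < v i then (-α * g i x) / (2 * v i) else 1)), ?_, fun i => ?_⟩
      · refine lt_min one_pos ?_
        rw [Finset.lt_inf'_iff]
        exact fun i _ => hq i
      · exact le_trans (min_le_right _ _) (Finset.inf'_le _ (Finset.mem_univ i))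
  refine ⟨t • ξ, fun i => ?_, fun j => ?_⟩
  · rw [real_inner_smul_right]
    have hvi' : ⟪gradient (g i) x, ξ⟫ = v i := rfl
    rw [hvi']
    by_cases hvi : 0 < v i
    · have hgi : g i x ≠ 0 := by
        intro h0
        have h5 : v i < 0 := hξg i h0
        linarith
      have hglt : g i x < 0 := lt_of_le_of_ne (hgle i) hgi
      have hr : 0 < -α * g i x := by nlinarith
      have h1 := htle i
      rw [if_pos hvi] at h1
      have h2 : t * v i ≤ (-α * g i x) / (2 * v i) * v i :=
        mul_le_mul_of_nonneg_right h1 hvi.le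
      have h3 : (-α * g i x) / (2 * v i) * v i = (-α * g i x) / 2 := by
        field_simp
      rw [h3] at h2
      linarith
    · push_neg at hvi
      by_cases hgi : g i x = 0
      · have hlt : v i < 0 := hξg i hgi
        have : t * v i < 0 := mul_neg_of_pos_of_neg htpos hlt
        rw [hgi]; linarith
      · have hglt : g i x < 0 := lt_of_le_of_ne (hgle i) hgi
        have hr : 0 < -α * g i x := by nlinarith
        nlinarith
  · rw [real_inner_smul_right, hξH j, hheq j]
    ring

theorem statement4' {n m k : ℕ}
    (g : Fin m → EuclideanSpace ℝ (Fin n) → ℝ)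
    (H : Fin k → EuclideanSpace ℝ (Fin n)) (c : Fin k → ℝ)
    (hg : ∀ i, ContDiff ℝ 1 (g i))
    (hmfcq : ∀ x ∈ constraintSet g H c, MFCQat g H x)
    (α : ℝ) (hα : 0 < α) :
    ((∀ x : EuclideanSpace ℝ (Fin n), Convex ℝ (Talpha g H c α x)) ∧
      (∀ x ∈ constraintSet g H c,
        ∃ ξ : EuclideanSpace ℝ (Fin n),
          (∀ i, ⟪gradient (g i) x, ξ⟫ < -α * g i x) ∧
          ∀ j, ⟪H j, ξ⟫ = -α * (⟪H j, x⟫ - c j)) ∧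
      (∃ X : Set (EuclideanSpace ℝ (Fin n)), IsOpen X ∧ constraintSet g H c ⊆ X ∧
        ∀ x ∈ X, (Talpha g H c α x).Nonempty) ∧
      (∀ x ∈ constraintSet g H c, Talpha g H c α x ⊆ tangentC g H x)) := by
  classical
  refine ⟨?_, ?_, ?_, ?_⟩
  · -- (i) convexity
    intro x ξ₁ hξ₁ ξ₂ hξ₂ a b ha hb hab
    obtain ⟨h1g, h1H⟩ := hξ₁
    obtain ⟨h2g, h2H⟩ := hξ₂
    constructor
    · intro i
      rw [inner_add_right, real_inner_smul_right, real_inner_smul_right]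
      have e1 : a * ⟪gradient (g i) x, ξ₁⟫ ≤ a * (-α * g i x) :=
        mul_le_mul_of_nonneg_left (h1g i) ha
      have e2 : b * ⟪gradient (g i) x, ξ₂⟫ ≤ b * (-α * g i x) :=
        mul_le_mul_of_nonneg_left (h2g i) hb
      have e3 : a * (-α * g i x) + b * (-α * g i x) = -α * g i x := by
        rw [← add_mul, hab, one_mul]
      linarith
    · intro j
      rw [inner_add_right, real_inner_smul_right, real_inner_smul_right, h1H j, h2H j]
      have : a * (-α * (⟪H j, x⟫ - c j)) + b * (-α * (⟪H j, x⟫ - c j))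
          = (a + b) * (-α * (⟪H j, x⟫ - c j)) := by ring
      rw [this, hab, one_mul]
  · -- (ii) Slater
    exact fun x hx => slater_of_mfcq hα hx (hmfcq x hx)
  · -- (iii) nonemptiness on an open neighborhood of C
    have key : ∀ x₀ ∈ constraintSet g H c, ∃ U : Set (EuclideanSpace ℝ (Fin n)),
        IsOpen U ∧ x₀ ∈ U ∧ ∀ x ∈ U, (Talpha g H c α x).Nonempty := by
      intro x₀ hx₀
      obtain ⟨ξ₀, hξ₀g, hξ₀H⟩ := slater_of_mfcq hα hx₀ (hmfcq x₀ hx₀)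
      obtain ⟨B, hB⟩ := exists_linear_section H (hmfcq x₀ hx₀).1
      -- candidate: ξ x = ξ₀ + B (y x) where (y x) j = -α (⟪H j, x⟫ - c j) - ⟪H j, ξ₀⟫
      set y : EuclideanSpace ℝ (Fin n) → (Fin k → ℝ) :=
        fun x j => -α * (⟪H j, x⟫ - c j) - ⟪H j, ξ₀⟫ with hy
      set w : EuclideanSpace ℝ (Fin n) → EuclideanSpace ℝ (Fin n) :=
        fun x => ξ₀ + B (y x) with hw
      have hy_cont : Continuous y := by
        apply continuous_pi
        intro j
        exact ((continuous_const.mul (((innerSL ℝ (H j)).continuous).sub continuous_const))).sub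
          continuous_const
      have hw_cont : Continuous w :=
        continuous_const.add (B.continuous_of_finiteDimensional.comp hy_cont)
      have hwH : ∀ x j, ⟪H j, w x⟫ = -α * (⟪H j, x⟫ - c j) := by
        intro x j
        rw [hw]
        simp only [inner_add_right, hB (y x) j]
        simp only [hy]
        ring
      have hy0 : y x₀ = 0 := by
        funext j
        show -α * (⟪H j, x₀⟫ - c j) - ⟪H j, ξ₀⟫ = 0
        rw [hξ₀H j]
        ring
      have hw0 : w x₀ = ξ₀ := by rw [hw]; simp [hy0]
      -- the inequality defect functions
      set φ : Fin m → EuclideanSpace ℝ (Fin n) → ℝ :=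
        fun i x => ⟪gradient (g i) x, w x⟫ + α * g i x with hφ
      have hφ_cont : ∀ i, Continuous (φ i) := by
        intro i
        exact ((cont_grad (hg i)).inner hw_cont).add
          (continuous_const.mul (hg i).continuous)
      have hφ0 : ∀ i, φ i x₀ < 0 := by
        intro i
        rw [hφ]
        simp only [hw0]
        have := hξ₀g i
        linarith
      refine ⟨⋂ i, φ i ⁻¹' Iio 0, ?_, ?_, ?_⟩
      · exact isOpen_iInter_of_finite fun i => (isOpen_Iio).preimage (hφ_cont i)
      · exact mem_iInter.mpr fun i => hφ0 i
      · intro x hx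
        refine ⟨w x, fun i => ?_, fun j => hwH x j⟩
        have := mem_iInter.mp hx i
        simp only [mem_preimage, mem_Iio, hφ] at this
        linarith
    choose U hUo hUx hUn using key
    refine ⟨⋃ (x₀ : EuclideanSpace ℝ (Fin n)) (h : x₀ ∈ constraintSet g H c), U x₀ h,
      ?_, ?_, ?_⟩
    · exact isOpen_iUnion fun x₀ => isOpen_iUnion fun h => hUo x₀ h
    · intro x₀ h
      exact mem_iUnion.mpr ⟨x₀, mem_iUnion.mpr ⟨h, hUx x₀ h⟩⟩
    · intro x hx
      obtain ⟨x₀, hx₀⟩ := mem_iUnion.mp hx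
      obtain ⟨h, hxU⟩ := mem_iUnion.mp hx₀
      exact hUn x₀ h x hxU
  · -- (iv) inclusion in tangent cone
    intro x hx ξ hξ
    obtain ⟨hξg, hξH⟩ := hξ
    refine ⟨fun j => ?_, fun i hi => ?_⟩
    · rw [hξH j, hx.2 j]; ring
    · have := hξg i
      rw [hi] at this
      linarith


/-- Properties of the α-restricted tangent set: (i) convexity;
(ii) Slater's condition on `C` (hence MFCQ holds at every point of `T_C^(α)(x)`);
(iii) nonemptiness on an open set containing `C`; (iv) inclusion in the tangent cone
on `C`. -/
theorem statement4 {n m k : ℕ}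
    (F : EuclideanSpace ℝ (Fin n) → EuclideanSpace ℝ (Fin n))
    (g : Fin m → EuclideanSpace ℝ (Fin n) → ℝ)
    (H : Fin k → EuclideanSpace ℝ (Fin n)) (c : Fin k → ℝ)
    (hF : ContDiff ℝ 1 F) (hg : ∀ i, ContDiff ℝ 1 (g i))
    (hgconv : ∀ i, ConvexOn ℝ Set.univ (g i))
    (hmfcq : ∀ x ∈ constraintSet g H c, MFCQat g H x)
    (α : ℝ) (hα : 0 < α) :
    -- (i) convexity of the α-restricted tangent set everywhere
    ((∀ x : EuclideanSpace ℝ (Fin n), Convex ℝ (Talpha g H c α x)) ∧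
    -- (ii) Slater's condition on C
      (∀ x ∈ constraintSet g H c,
        ∃ ξ : EuclideanSpace ℝ (Fin n),
          (∀ i, ⟪gradient (g i) x, ξ⟫ < -α * g i x) ∧
          ∀ j, ⟪H j, ξ⟫ = -α * (⟪H j, x⟫ - c j)) ∧
    -- (iii) nonemptiness on an open set containing C
      (∃ X : Set (EuclideanSpace ℝ (Fin n)), IsOpen X ∧ constraintSet g H c ⊆ X ∧
        ∀ x ∈ X, (Talpha g H c α x).Nonempty) ∧
    -- (iv) inclusion in the tangent cone on C
      (∀ x ∈ constraintSet g H c, Talpha g H c α x ⊆ tangentC g H x)) :=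
  statement4' g H c hg hmfcq α hα

end
end

section
/- Assume MFCQ holds at every point of C and let X ⊆ ℝⁿ be an open set containing C on which the set K_{cbf,α}(x) of inputs (u, v) ∈ ℝ^m_{≥0} × ℝ^k satisfying (∂g(x)/∂x)𝓕(x,u,v) ≤ −α g(x) and (∂h(x)/∂x)𝓕(x,u,v) = −α h(x) is nonempty, where 𝓕(x, u, v) = −F(x) − Σ_i u_i ∇g_i(x) − Σ_j v_j ∇h_j(x). Let (u, v) be any minimizer of J(x, u, v) = (1/2)‖Σ_i u_i ∇g_i(x) + Σ_j v_j ∇h_j(x)‖² over K_{cbf,α}(x) for x ∈ X. Then 𝓕(x, u, v) equals the Euclidean projection of −F(x) onto the α-restricted tangent set T_C^(α)(x); in particular, the closed-loop vector field 𝓖_α(x) = 𝓕(x, u, v) is independent of the chosen minimizer. -/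
open scoped RealInnerProductSpace BigOperators Topology
open Set Filter

noncomputable section

section AuxSMF

set_option linter.unusedSectionVars false
set_option linter.unusedVariables false
set_option maxHeartbeats 1000000

variable {E : Type*} [NormedAddCommGroup E] [InnerProductSpace ℝ E] [FiniteDimensional ℝ E]

/-- The cone of nonnegative combinations of a finite family. -/
def coneOf {ι : Type*} [Fintype ι] (w : ι → E) : Set E :=
  {x | ∃ l : ι → ℝ, (∀ i, 0 ≤ l i) ∧ x = ∑ i, l i • w i}

lemma piece_isClosed {ι : Type*} [Fintype ι] (w : ι → E) (t : Finset ι)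
    (ht : LinearIndependent ℝ (fun i : t => w i)) :
    IsClosed {x : E | ∃ l : ι → ℝ, (∀ i, 0 ≤ l i) ∧ x = ∑ i ∈ t, l i • w i} := by
  classical
  set φ : (t → ℝ) →ₗ[ℝ] E :=
    { toFun := fun cc => ∑ i : t, cc i • w (i : ι)
      map_add' := by intro c d; simp [add_smul, Finset.sum_add_distrib]
      map_smul' := by intro r c; simp [Finset.smul_sum, smul_smul] } with hφ
  have hker : LinearMap.ker φ = ⊥ := by
    rw [LinearMap.ker_eq_bot']
    intro c hc
    exact funext (Fintype.linearIndependent_iff.mp ht c hc)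
  obtain ⟨π, hπ⟩ := φ.exists_leftInverse_of_injective hker
  have hπφ : ∀ c, π (φ c) = c := fun c => by
    have := LinearMap.ext_iff.mp hπ c
    simpa using this
  have hset : {x : E | ∃ l : ι → ℝ, (∀ i, 0 ≤ l i) ∧ x = ∑ i ∈ t, l i • w i}
      = (LinearMap.range φ : Set E) ∩ ⋂ i : t, {x | 0 ≤ π x i} := by
    ext x
    constructor
    · rintro ⟨l, hl, rfl⟩
      have hx : (∑ i ∈ t, l i • w i) = φ (fun i : t => l i) := by
        simp only [hφ, LinearMap.coe_mk, AddHom.coe_mk]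
        exact (Finset.sum_coe_sort t (fun i => l i • w i)).symm
      constructor
      · exact ⟨_, hx.symm⟩
      · refine Set.mem_iInter.mpr fun i => ?_
        show 0 ≤ π (∑ i ∈ t, l i • w i) i
        rw [hx, hπφ]
        exact hl i
    · rintro ⟨⟨c, rfl⟩, hpos⟩
      refine ⟨fun i => if h : i ∈ t then c ⟨i, h⟩ else 0, ?_, ?_⟩
      · intro i
        by_cases h : i ∈ t
        · have := Set.mem_iInter.mp hpos ⟨i, h⟩
          simp only [Set.mem_setOf_eq, hπφ] at this
          simpa [h] using this
        · simp [h]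
      · rw [← Finset.sum_attach t (fun i => (if h : i ∈ t then c ⟨i, h⟩ else 0) • w i)]
        simp only [hφ, LinearMap.coe_mk, AddHom.coe_mk, Finset.univ_eq_attach]
        refine (Finset.sum_congr rfl fun i _ => ?_).symm
        rw [dif_pos i.2]
  rw [hset]
  have h1 : IsClosed (LinearMap.range φ : Set E) := Submodule.closed_of_finiteDimensional _
  have h2 : ∀ i : t, IsClosed {x : E | 0 ≤ π x i} := fun i =>
    isClosed_le continuous_const ((continuous_apply i).comp π.continuous_of_finiteDimensional)
  exact h1.inter (isClosed_iInter h2)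


lemma cara {ι : Type*} [Fintype ι] (w : ι → E) (s : Finset ι) :
    ∀ (l : ι → ℝ), (∀ i, 0 ≤ l i) →
      ∃ t : Finset ι, t ⊆ s ∧ LinearIndependent ℝ (fun i : t => w i) ∧
        ∃ mu : ι → ℝ, (∀ i, 0 ≤ mu i) ∧ ∑ i ∈ t, mu i • w i = ∑ i ∈ s, l i • w i := by
  classical
  induction s using Finset.strongInduction with
  | _ s ih =>
    intro l hl
    by_cases hLI : LinearIndependent ℝ (fun i : s => w i)
    · exact ⟨s, Finset.Subset.refl s, hLI, l, hl, rfl⟩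
    · obtain ⟨cc, hccsum, i₁, hi₁⟩ := Fintype.not_linearIndependent_iff.mp hLI
      -- build a signed dependency γ supported on s with a positive entry
      have hkey : ∃ γ : ι → ℝ, (∀ i, i ∉ s → γ i = 0) ∧ (∑ i ∈ s, γ i • w i = 0) ∧
          ∃ i ∈ s, 0 < γ i := by
        set γ : ι → ℝ := fun i => if h : i ∈ s then cc ⟨i, h⟩ else 0 with hγ
        have hγ0 : ∀ i, i ∉ s → γ i = 0 := fun i h => by simp [hγ, h]
        have hγsum : ∑ i ∈ s, γ i • w i = 0 := by
          rw [← Finset.sum_attach s (fun i => γ i • w i)]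
          have : ∀ i : s, γ (i : ι) • w (i : ι) = cc i • w (i : ι) := fun i => by
            simp [hγ, i.2]
          rw [Finset.univ_eq_attach] at hccsum
          rw [Finset.sum_congr rfl (fun i _ => this i)]
          exact hccsum
        have hγi₁ : γ (i₁ : ι) = cc i₁ := by simp [hγ, i₁.2]
        rcases lt_or_gt_of_ne hi₁ with hneg | hpos
        · refine ⟨-γ, fun i h => by simp [hγ0 i h], ?_, ⟨i₁, i₁.2, ?_⟩⟩
          · simp only [Pi.neg_apply, neg_smul, Finset.sum_neg_distrib]
            rw [hγsum]; simp
          · simp only [Pi.neg_apply, hγi₁]; linarith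
        · exact ⟨γ, hγ0, hγsum, ⟨i₁, i₁.2, hγi₁ ▸ hpos⟩⟩
      obtain ⟨γ, hγ0, hγsum, iwit, hiwits, hiwitpos⟩ := hkey
      set P : Finset ι := s.filter (fun i => 0 < γ i) with hP
      have hPne : P.Nonempty := ⟨iwit, Finset.mem_filter.mpr ⟨hiwits, hiwitpos⟩⟩
      obtain ⟨i₀, hi₀P, hmin⟩ := P.exists_min_image (fun i => l i / γ i) hPne
      have hi₀s : i₀ ∈ s := (Finset.mem_filter.mp hi₀P).1
      have hγi₀ : 0 < γ i₀ := (Finset.mem_filter.mp hi₀P).2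
      set r : ℝ := l i₀ / γ i₀ with hr
      have hr0 : 0 ≤ r := div_nonneg (hl i₀) hγi₀.le
      set l' : ι → ℝ := fun i => l i - r * γ i with hl'def
      have hl' : ∀ i, 0 ≤ l' i := by
        intro i
        by_cases hs : i ∈ s
        · by_cases hγi : 0 < γ i
          · have : r ≤ l i / γ i := hmin i (Finset.mem_filter.mpr ⟨hs, hγi⟩)
            have := (le_div_iff₀ hγi).mp this
            simp only [hl'def]; linarith
          · push_neg at hγi
            have : r * γ i ≤ 0 := mul_nonpos_of_nonneg_of_nonpos hr0 hγi
            have := hl i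
            simp only [hl'def]; linarith
        · simp only [hl'def, hγ0 i hs, mul_zero, sub_zero]; exact hl i
      have hl'i₀ : l' i₀ = 0 := by
        simp only [hl'def, hr]
        field_simp
        ring
      have hsum' : ∑ i ∈ s.erase i₀, l' i • w i = ∑ i ∈ s, l i • w i := by
        rw [Finset.sum_erase s (by rw [hl'i₀, zero_smul])]
        have : ∀ i, l' i • w i = l i • w i - r • (γ i • w i) := by
          intro i; simp only [hl'def, sub_smul, smul_smul]
        rw [Finset.sum_congr rfl (fun i _ => this i), Finset.sum_sub_distrib,
          ← Finset.smul_sum, hγsum, smul_zero, sub_zero]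
      obtain ⟨t, hts, hLI', mu, hmu, hmusum⟩ :=
        ih (s.erase i₀) (Finset.erase_ssubset hi₀s) l' hl'
      exact ⟨t, hts.trans (Finset.erase_subset _ _), hLI', mu, hmu, by rw [hmusum, hsum']⟩


lemma coneOf_isClosed {ι : Type*} [Fintype ι] (w : ι → E) : IsClosed (coneOf w) := by
  classical
  have hrw : coneOf w = ⋃ t ∈ {t : Finset ι | LinearIndependent ℝ (fun i : t => w i)},
      {x : E | ∃ l : ι → ℝ, (∀ i, 0 ≤ l i) ∧ x = ∑ i ∈ t, l i • w i} := by
    ext x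
    simp only [Set.mem_iUnion, Set.mem_setOf_eq, coneOf, exists_prop]
    constructor
    · rintro ⟨l, hl, rfl⟩
      obtain ⟨t, -, hLI, mu, hmu, hsum⟩ := cara w Finset.univ l hl
      exact ⟨t, hLI, mu, hmu, hsum.symm⟩
    · rintro ⟨t, hLI, l, hl, rfl⟩
      refine ⟨fun i => if i ∈ t then l i else 0, fun i => ?_, ?_⟩
      · by_cases h : i ∈ t <;> simp [h, hl i]
      · rw [eq_comm]
        simp only [ite_smul, zero_smul]
        rw [Finset.sum_ite_mem, Finset.univ_inter]
  rw [hrw]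
  exact Set.Finite.isClosed_biUnion (Set.toFinite _) fun t ht => piece_isClosed w t ht

lemma gen_mem_coneOf {ι : Type*} [Fintype ι] (w : ι → E) (i : ι) : w i ∈ coneOf w := by
  classical
  refine ⟨fun j => if j = i then 1 else 0, fun j => by by_cases h : j = i <;> simp [h], ?_⟩
  simp [ite_smul]

lemma mem_coneOf_of_dual {ι : Type*} [Fintype ι] [CompleteSpace E] (w : ι → E) (x : E)
    (hx : ∀ d : E, (∀ i, 0 ≤ ⟪w i, d⟫) → 0 ≤ ⟪d, x⟫) : x ∈ coneOf w := by
  classical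
  set K : ConvexCone ℝ E :=
    { carrier := coneOf w
      smul_mem' := by
        rintro cr hcr x ⟨l, hl, rfl⟩
        exact ⟨fun i => cr * l i, fun i => mul_nonneg hcr.le (hl i), by
          rw [Finset.smul_sum]; simp [smul_smul]⟩
      add_mem' := by
        rintro x ⟨l, hl, rfl⟩ y ⟨l', hl', rfl⟩
        exact ⟨fun i => l i + l' i, fun i => add_nonneg (hl i) (hl' i), by
          simp [add_smul, Finset.sum_add_distrib]⟩ } with hK
  have hcl : IsClosed (K : Set E) := coneOf_isClosed w
  have hne : (K : Set E).Nonempty := ⟨0, fun _ => 0, fun _ => le_refl 0, by simp⟩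
  by_contra hxn
  obtain ⟨f, uu, hfx, hft⟩ := geometric_hahn_banach_point_closed K.convex hcl hxn
  have h0 : (0 : E) ∈ (K : Set E) := ⟨fun _ => 0, fun _ => le_refl 0, by simp⟩
  have hu0 : uu < 0 := by simpa using hft 0 h0
  have hcone : ∀ b ∈ (K : Set E), 0 ≤ f b := by
    intro b hb
    by_contra hneg
    push_neg at hneg
    have hr : 0 < uu / f b := div_pos_of_neg_of_neg hu0 hneg
    have := hft _ (K.smul_mem hr hb)
    rw [map_smul, smul_eq_mul, div_mul_cancel₀ _ hneg.ne] at this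
    exact lt_irrefl _ this
  set d := (InnerProductSpace.toDual ℝ E).symm f
  have hd : ∀ z, ⟪d, z⟫ = f z := fun z => InnerProductSpace.toDual_symm_apply
  have hdx := hx d (fun i => by
    have := hcone _ (gen_mem_coneOf w i)
    rw [← hd] at this
    rwa [real_inner_comm])
  rw [hd] at hdx
  linarith


lemma Tconvex {m k : ℕ} (a : Fin m → E) (hh : Fin k → E)
    (b : Fin m → ℝ) (dd : Fin k → ℝ) (T : Set E)
    (hT : ∀ ξ, ξ ∈ T ↔ (∀ i, ⟪a i, ξ⟫ ≤ b i) ∧ ∀ j, ⟪hh j, ξ⟫ = dd j) :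
    Convex ℝ T := by
  intro ξ₁ h₁ ξ₂ h₂ s t hs ht hst
  rw [hT] at h₁ h₂ ⊢
  constructor
  · intro i
    rw [inner_add_right, real_inner_smul_right, real_inner_smul_right]
    have hA := mul_le_mul_of_nonneg_left (h₁.1 i) hs
    have hB := mul_le_mul_of_nonneg_left (h₂.1 i) ht
    have : s * b i + t * b i = b i := by rw [← add_mul, hst, one_mul]
    linarith
  · intro j
    rw [inner_add_right, real_inner_smul_right, real_inner_smul_right, h₁.2 j, h₂.2 j,
      ← add_mul, hst, one_mul]

lemma Tclosed {m k : ℕ} (a : Fin m → E) (hh : Fin k → E)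
    (b : Fin m → ℝ) (dd : Fin k → ℝ) (T : Set E)
    (hT : ∀ ξ, ξ ∈ T ↔ (∀ i, ⟪a i, ξ⟫ ≤ b i) ∧ ∀ j, ⟪hh j, ξ⟫ = dd j) :
    IsClosed T := by
  have : T = (⋂ i, {ξ : E | ⟪a i, ξ⟫ ≤ b i}) ∩ ⋂ j, {ξ : E | ⟪hh j, ξ⟫ = dd j} := by
    ext ξ
    simp [hT ξ, Set.mem_iInter, forall_and]
  rw [this]
  exact (isClosed_iInter fun i =>
      isClosed_le (Continuous.inner continuous_const continuous_id) continuous_const).inter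
    (isClosed_iInter fun j =>
      isClosed_eq (Continuous.inner continuous_const continuous_id) continuous_const)

lemma absKey [CompleteSpace E] {m k : ℕ} (a : Fin m → E) (hh : Fin k → E)
    (b : Fin m → ℝ) (dd : Fin k → ℝ) (y : E) (T : Set E)
    (hT : ∀ ξ, ξ ∈ T ↔ (∀ i, ⟪a i, ξ⟫ ≤ b i) ∧ ∀ j, ⟪hh j, ξ⟫ = dd j)
    (u : Fin m → ℝ) (v : Fin k → ℝ) (hu : ∀ i, 0 ≤ u i)
    (humem : y - ((∑ i, u i • a i) + ∑ j, v j • hh j) ∈ T)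
    (hmin : ∀ (u' : Fin m → ℝ) (v' : Fin k → ℝ), (∀ i, 0 ≤ u' i) →
      (y - ((∑ i, u' i • a i) + ∑ j, v' j • hh j) ∈ T) →
      ‖(∑ i, u i • a i) + ∑ j, v j • hh j‖ ≤ ‖(∑ i, u' i • a i) + ∑ j, v' j • hh j‖) :
    ∀ z ∈ T, ‖(y - ((∑ i, u i • a i) + ∑ j, v j • hh j)) - y‖ ≤ ‖z - y‖ := by
  classical
  have hTc : Convex ℝ T := Tconvex a hh b dd T hT
  have hTcl : IsClosed T := Tclosed a hh b dd T hT
  have hTne : T.Nonempty := ⟨_, humem⟩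
  obtain ⟨p, hpT, hpdist⟩ :=
    exists_norm_eq_iInf_of_complete_convex hTne hTcl.isComplete hTc y
  have hVI : ∀ z ∈ T, ⟪y - p, z - p⟫ ≤ 0 :=
    (norm_eq_iInf_iff_real_inner_le_zero hTc hpT).mp hpdist
  -- Farkas step: p - y is a nonnegative combination of -a i, hh j, -hh j
  have hrep : p - y ∈ coneOf (Sum.elim (fun i => -a i) (Sum.elim hh (fun j => -hh j))) := by
    apply mem_coneOf_of_dual
    intro dvec hd
    have h1 : ∀ i, ⟪a i, dvec⟫ ≤ 0 := by
      intro i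
      have := hd (Sum.inl i)
      simp only [Sum.elim_inl, inner_neg_left] at this
      linarith
    have h2 : ∀ j, ⟪hh j, dvec⟫ = 0 := by
      intro j
      have hp1 := hd (Sum.inr (Sum.inl j))
      have hp2 := hd (Sum.inr (Sum.inr j))
      simp only [Sum.elim_inr, Sum.elim_inl, inner_neg_left] at hp1 hp2
      linarith
    have hz : p + dvec ∈ T := by
      rw [hT]
      constructor
      · intro i
        rw [inner_add_right]
        have := ((hT p).mp hpT).1 i
        have := h1 i
        linarith
      · intro j
        rw [inner_add_right, h2 j, add_zero]
        exact ((hT p).mp hpT).2 j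
    have hvi := hVI _ hz
    rw [add_sub_cancel_left] at hvi
    rw [real_inner_comm, inner_sub_left]
    rw [inner_sub_left] at hvi
    linarith
  obtain ⟨l, hl, hlsum⟩ := hrep
  set u' : Fin m → ℝ := fun i => l (Sum.inl i) with hu'def
  set v' : Fin k → ℝ := fun j => l (Sum.inr (Sum.inr j)) - l (Sum.inr (Sum.inl j)) with hv'def
  have hsum' : (∑ i, u' i • a i) + ∑ j, v' j • hh j = y - p := by
    rw [Fintype.sum_sum_type] at hlsum
    rw [Fintype.sum_sum_type] at hlsum
    simp only [Sum.elim_inl, Sum.elim_inr, smul_neg] at hlsum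
    have hv : ∀ j, v' j • hh j
        = l (Sum.inr (Sum.inr j)) • hh j - l (Sum.inr (Sum.inl j)) • hh j := fun j => by
      rw [hv'def, sub_smul]
    rw [Finset.sum_congr rfl fun j _ => hv j, Finset.sum_sub_distrib]
    have hyp : y - p = -(p - y) := by abel
    rw [hyp, hlsum]
    simp only [Finset.sum_neg_distrib]
    abel
  have hpmem : y - ((∑ i, u' i • a i) + ∑ j, v' j • hh j) ∈ T := by
    rw [hsum', sub_sub_cancel]
    exact hpT
  have hcomp := hmin u' v' (fun i => hl (Sum.inl i)) hpmem
  rw [hsum'] at hcomp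
  intro z hz
  have hbdd : BddBelow (Set.range fun w : T => ‖y - (w : E)‖) := by
    refine ⟨0, ?_⟩
    rintro r ⟨wpt, rfl⟩
    exact norm_nonneg _
  calc ‖(y - ((∑ i, u i • a i) + ∑ j, v j • hh j)) - y‖
      = ‖(∑ i, u i • a i) + ∑ j, v j • hh j‖ := by
        rw [sub_sub_cancel_left, norm_neg]
    _ ≤ ‖y - p‖ := hcomp
    _ ≤ ‖y - z‖ := by rw [hpdist]; exact ciInf_le hbdd ⟨z, hz⟩
    _ = ‖z - y‖ := norm_sub_rev _ _


lemma proj_unique_gen [CompleteSpace E] {K : Set E} (hconv : Convex ℝ K)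
    {y p₁ p₂ : E} (h₁m : p₁ ∈ K) (h₁ : ∀ z ∈ K, ‖p₁ - y‖ ≤ ‖z - y‖)
    (h₂m : p₂ ∈ K) (h₂ : ∀ z ∈ K, ‖p₂ - y‖ ≤ ‖z - y‖) :
    p₁ = p₂ := by
  have vi : ∀ p, p ∈ K → (∀ z ∈ K, ‖p - y‖ ≤ ‖z - y‖) → ∀ z ∈ K, ⟪y - p, z - p⟫ ≤ 0 := by
    intro p hpm hp
    haveI : Nonempty K := ⟨⟨p, hpm⟩⟩
    have hiInf : ‖y - p‖ = ⨅ w : K, ‖y - (w : E)‖ := by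
      refine le_antisymm (le_ciInf fun wpt => ?_) (ciInf_le (⟨0, ?_⟩ : BddBelow (Set.range fun w : K => ‖y - (w : E)‖)) ⟨p, hpm⟩)
      · rw [norm_sub_rev, norm_sub_rev y]
        exact hp wpt wpt.2
      · rintro r ⟨wpt, rfl⟩
        exact norm_nonneg _
    exact (norm_eq_iInf_iff_real_inner_le_zero hconv hpm).mp hiInf
  have h12 := vi p₁ h₁m h₁ p₂ h₂m
  have h21 := vi p₂ h₂m h₂ p₁ h₁m
  have hexp : ⟪p₂ - p₁, p₂ - p₁⟫ = ⟪y - p₁, p₂ - p₁⟫ + ⟪y - p₂, p₁ - p₂⟫ := by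
    calc ⟪p₂ - p₁, p₂ - p₁⟫ = ⟪(y - p₁) - (y - p₂), p₂ - p₁⟫ := by
          rw [show (y - p₁) - (y - p₂) = p₂ - p₁ by abel]
      _ = ⟪y - p₁, p₂ - p₁⟫ - ⟪y - p₂, p₂ - p₁⟫ := inner_sub_left _ _ _
      _ = ⟪y - p₁, p₂ - p₁⟫ + ⟪y - p₂, p₁ - p₂⟫ := by
          rw [show p₁ - p₂ = -(p₂ - p₁) by abel, inner_neg_right]
          ring
  have hle : ⟪p₂ - p₁, p₂ - p₁⟫ ≤ 0 := by rw [hexp]; linarith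
  have : p₂ - p₁ = 0 := real_inner_self_nonpos.mp hle
  exact (sub_eq_zero.mp this).symm


end AuxSMF

set_option maxHeartbeats 1000000 in
/-- Equivalence of control-based and projection-based implementations
of the safe monotone flow: if `(u,v)` minimizes `J(x,·,·)` over `K_{cbf,α}(x)` for
`x ∈ X`, then `𝓕(x,u,v)` is the Euclidean projection of `-F(x)` onto `T_C^(α)(x)`;
in particular the closed-loop field is independent of the chosen minimizer. -/
theorem statement5 {n m k : ℕ}
    (F : EuclideanSpace ℝ (Fin n) → EuclideanSpace ℝ (Fin n))
    (g : Fin m → EuclideanSpace ℝ (Fin n) → ℝ)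
    (H : Fin k → EuclideanSpace ℝ (Fin n)) (c : Fin k → ℝ)
    (hF : ContDiff ℝ 1 F) (hg : ∀ i, ContDiff ℝ 1 (g i))
    (hgconv : ∀ i, ConvexOn ℝ Set.univ (g i))
    (hmfcq : ∀ x ∈ constraintSet g H c, MFCQat g H x)
    (α : ℝ) (hα : 0 < α)
    (X : Set (EuclideanSpace ℝ (Fin n))) (hX : IsOpen X)
    (hCX : constraintSet g H c ⊆ X)
    (hKne : ∀ x ∈ X, (Kcbf F g H c α x).Nonempty)
    (x : EuclideanSpace ℝ (Fin n)) (hx : x ∈ X)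
    (u : Fin m → ℝ) (v : Fin k → ℝ)
    (hmem : (u, v) ∈ Kcbf F g H c α x)
    (hmin : ∀ p ∈ Kcbf F g H c α x, Jcost g H x (u, v) ≤ Jcost g H x p) :
    -- `𝓕(x,u,v)` is the projection of `-F(x)` onto the α-restricted tangent set
    (IsProjOn (Talpha g H c α x) (-F x) (Fcl F g H x u v) ∧
    -- and the closed-loop field does not depend on the chosen minimizer
      ∀ u' v', (u', v') ∈ Kcbf F g H c α x →
        (∀ p ∈ Kcbf F g H c α x, Jcost g H x (u', v') ≤ Jcost g H x p) →
        Fcl F g H x u' v' = Fcl F g H x u v) := by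
  classical
  have hT : ∀ ξ, ξ ∈ Talpha g H c α x ↔
      (∀ i, ⟪gradient (g i) x, ξ⟫ ≤ -α * g i x) ∧
      ∀ j, ⟪H j, ξ⟫ = -α * (⟪H j, x⟫ - c j) := fun ξ => Iff.rfl
  have hFcl : ∀ (u₁ : Fin m → ℝ) (v₁ : Fin k → ℝ), Fcl F g H x u₁ v₁
      = (-F x) - ((∑ i, u₁ i • gradient (g i) x) + ∑ j, v₁ j • H j) := by
    intro u₁ v₁
    simp only [Fcl]
    rw [sub_sub]
  have main : ∀ (u₀ : Fin m → ℝ) (v₀ : Fin k → ℝ), (u₀, v₀) ∈ Kcbf F g H c α x →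
      (∀ p ∈ Kcbf F g H c α x, Jcost g H x (u₀, v₀) ≤ Jcost g H x p) →
      IsProjOn (Talpha g H c α x) (-F x) (Fcl F g H x u₀ v₀) := by
    intro u₀ v₀ hmem₀ hmin₀
    obtain ⟨hu₀, h1₀, h2₀⟩ := hmem₀
    refine ⟨⟨h1₀, h2₀⟩, ?_⟩
    have habs := absKey (fun i => gradient (g i) x) H (fun i => -α * g i x)
      (fun j => -α * (⟪H j, x⟫ - c j)) (-F x) (Talpha g H c α x) hT u₀ v₀ hu₀
      (by rw [← hFcl]; exact ⟨h1₀, h2₀⟩)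
      (by
        intro u₁ v₁ hu₁ hmem₁
        rw [← hFcl] at hmem₁
        have hKmem : (u₁, v₁) ∈ Kcbf F g H c α x := ⟨hu₁, hmem₁.1, hmem₁.2⟩
        have hJ := hmin₀ (u₁, v₁) hKmem
        simp only [Jcost] at hJ
        have hsq : ‖(∑ i, u₀ i • gradient (g i) x) + ∑ j, v₀ j • H j‖ ^ 2
            ≤ ‖(∑ i, u₁ i • gradient (g i) x) + ∑ j, v₁ j • H j‖ ^ 2 := by linarith
        have := Real.sqrt_le_sqrt hsq
        rwa [Real.sqrt_sq (norm_nonneg _), Real.sqrt_sq (norm_nonneg _)] at this)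
    intro z hz
    rw [hFcl u₀ v₀]
    exact habs z hz
  refine ⟨main u v hmem hmin, fun u' v' hmem' hmin' => ?_⟩
  have P1 := main u' v' hmem' hmin'
  have P2 := main u v hmem hmin
  exact proj_unique_gen
    (Tconvex (fun i => gradient (g i) x) H (fun i => -α * g i x)
      (fun j => -α * (⟪H j, x⟫ - c j)) (Talpha g H c α x) hT)
    P1.1 P1.2 P2.1 P2.2


end
end
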